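/- Let P be a finite poset on {p_1,...,p_n}. The poset ideals (down-sets) J of P are in bijection with the 'antichain-cut' minimal vertex covers of the bipartite graph G(P) (edges {x_i,y_j} iff p_i ≤ p_j): specifically, for every down-set J of P, the set {x_i : p_i ∈ J} ∪ {y_j : p_j ∉ J} is a minimal vertex cover of G(P), and every minimal vertex cover of G(P) arises this way from a unique down-set. -/

import Mathlib

/-!
Minimality of a vertex cover `C` is equivalent to: every `x_p ∈ C` has a neighbour `y_j ∉ C`, and
every `y_j ∈ C` has a neighbour `x_i ∉ C`. For a cut set of a down-set `J` the loops `{x_p, y_p}`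
provide these neighbours. Conversely, for a minimal cover `C` the set `J = {i | x_i ∈ C}` is a
down-set by transitivity, and reflexivity together with the witnesses forces `y_j ∈ C ↔ x_j ∉ C`,
so `C` is the cut set of `J`.
-/

def IsCover (n : ℕ) (E : Fin n → Fin n → Prop) (C : Set (Fin n ⊕ Fin n)) : Prop :=
  ∀ i j, E i j → Sum.inl i ∈ C ∨ Sum.inr j ∈ C

def IsMinCover (n : ℕ) (E : Fin n → Fin n → Prop) (C : Set (Fin n ⊕ Fin n)) : Prop :=
  IsCover n E C ∧ ∀ D ⊂ C, ¬ IsCover n E D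

def IsDownClosed {n : ℕ} (E : Fin n → Fin n → Prop) (J : Set (Fin n)) : Prop :=
  ∀ p q, E q p → p ∈ J → q ∈ J

def cutSet {n : ℕ} (J : Set (Fin n)) : Set (Fin n ⊕ Fin n) :=
  Sum.inl '' J ∪ Sum.inr '' Jᶜ

section Cover

variable {n : ℕ} {E : Fin n → Fin n → Prop} {C : Set (Fin n ⊕ Fin n)}

@[simp]
theorem inl_mem_cutSet {J : Set (Fin n)} {i : Fin n} : Sum.inl i ∈ cutSet J ↔ i ∈ J := by
  simp [cutSet]

@[simp]
theorem inr_mem_cutSet {J : Set (Fin n)} {j : Fin n} : Sum.inr j ∈ cutSet J ↔ j ∉ J := by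
  simp [cutSet]

theorem cutSet_injective : Function.Injective (cutSet : Set (Fin n) → Set (Fin n ⊕ Fin n)) := by
  intro J J' h
  ext i
  rw [← inl_mem_cutSet, h, inl_mem_cutSet]

theorem IsCover.mono {D : Set (Fin n ⊕ Fin n)} (hC : IsCover n E C) (hCD : C ⊆ D) :
    IsCover n E D :=
  fun i j hij => (hC i j hij).imp (@hCD _) (@hCD _)

theorem isMinCover_iff_not_isCover_diff_singleton :
    IsMinCover n E C ↔ IsCover n E C ∧ ∀ v ∈ C, ¬ IsCover n E (C \ {v}) := by
  refine and_congr_right fun _ => ⟨fun h v hv => h _ (Set.sdiff_singleton_ssubset.mpr hv), ?_⟩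
  intro h D hDC hD
  obtain ⟨v, hvC, hvD⟩ := Set.exists_of_ssubset hDC
  exact h v hvC (hD.mono fun w hw => ⟨hDC.1 hw, fun hwv => hvD (hwv ▸ hw)⟩)

theorem IsCover.isCover_diff_inl_iff (hC : IsCover n E C) (p : Fin n) :
    IsCover n E (C \ {Sum.inl p}) ↔ ∀ j, E p j → Sum.inr j ∈ C := by
  refine ⟨fun h j hpj => ?_, fun h i j hij => ?_⟩
  · rcases h p j hpj with hp | hj
    · exact absurd rfl hp.2
    · exact hj.1
  · by_cases hip : i = p
    · subst hip
      exact Or.inr ⟨h j hij, by simp⟩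
    · exact (hC i j hij).imp (fun hi => ⟨hi, by simpa using hip⟩) (fun hj => ⟨hj, by simp⟩)

theorem IsCover.isCover_diff_inr_iff (hC : IsCover n E C) (j : Fin n) :
    IsCover n E (C \ {Sum.inr j}) ↔ ∀ i, E i j → Sum.inl i ∈ C := by
  refine ⟨fun h i hij => ?_, fun h i j' hij => ?_⟩
  · rcases h i j hij with hi | hj
    · exact hi.1
    · exact absurd rfl hj.2
  · by_cases hjj : j' = j
    · subst hjj
      exact Or.inl ⟨h i hij, by simp⟩
    · exact (hC i j' hij).imp (fun hi => ⟨hi, by simp⟩) (fun hj => ⟨hj, by simpa using hjj⟩)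

theorem isMinCover_iff_exists_uncovered_neighbor :
    IsMinCover n E C ↔ IsCover n E C ∧
      (∀ p, Sum.inl p ∈ C → ∃ j, E p j ∧ Sum.inr j ∉ C) ∧
      (∀ j, Sum.inr j ∈ C → ∃ i, E i j ∧ Sum.inl i ∉ C) := by
  rw [isMinCover_iff_not_isCover_diff_singleton]
  refine and_congr_right fun hC => ?_
  simp only [Sum.forall, hC.isCover_diff_inl_iff, hC.isCover_diff_inr_iff, not_forall,
    exists_prop]

theorem isCover_cutSet_iff {J : Set (Fin n)} : IsCover n E (cutSet J) ↔ IsDownClosed E J := by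
  simp only [IsCover, IsDownClosed, inl_mem_cutSet, inr_mem_cutSet, or_iff_not_imp_right, not_not]
  exact ⟨fun h p q hqp => h q p hqp, fun h i j hij => h j i hij⟩

theorem isMinCover_cutSet [Std.Refl E] {J : Set (Fin n)} (hJ : IsDownClosed E J) :
    IsMinCover n E (cutSet J) := by
  refine isMinCover_iff_exists_uncovered_neighbor.mpr ⟨isCover_cutSet_iff.mpr hJ, ?_, ?_⟩
  · exact fun p hp => ⟨p, refl p, by simpa using hp⟩
  · exact fun j hj => ⟨j, refl j, by simpa using hj⟩

theorem IsMinCover.isDownClosed_inl_preimage [IsTrans (Fin n) E] (hC : IsMinCover n E C) :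
    IsDownClosed E (Sum.inl ⁻¹' C) := by
  intro p q hqp hp
  obtain ⟨j, hpj, hj⟩ := (isMinCover_iff_exists_uncovered_neighbor.mp hC).2.1 p hp
  exact (hC.1 q j (trans_of E hqp hpj)).resolve_right hj

theorem IsMinCover.eq_cutSet [Std.Refl E] [IsTrans (Fin n) E] (hC : IsMinCover n E C) :
    C = cutSet (Sum.inl ⁻¹' C) := by
  ext (i | j)
  · simp
  · rw [inr_mem_cutSet, Set.mem_preimage]
    refine ⟨fun hj hjC => ?_, (hC.1 j j (refl j)).resolve_left⟩
    obtain ⟨i, hij, hi⟩ := (isMinCover_iff_exists_uncovered_neighbor.mp hC).2.2 j hj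
    exact hi (hC.isDownClosed_inl_preimage j i hij hjC)

end Cover

/-- for a finite poset `P` on `{p_1,…,p_n}` and the bipartite graph `G(P)`
(`{x_i,y_j} ∈ E ⟺ p_i ≤ p_j`), every down-set `J` gives a minimal vertex cover
`{x_i : p_i ∈ J} ∪ {y_j : p_j ∉ J}`, and every minimal vertex cover arises this way from a
unique down-set. -/
theorem stmt19 (n : ℕ) (le : Fin n → Fin n → Prop) [IsPartialOrder (Fin n) le] :
    (∀ J : Set (Fin n), (∀ p q : Fin n, le q p → p ∈ J → q ∈ J) →
      IsMinCover n le (Sum.inl '' J ∪ Sum.inr '' Jᶜ)) ∧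
    (∀ C, IsMinCover n le C →
      ∃! J : Set (Fin n), (∀ p q : Fin n, le q p → p ∈ J → q ∈ J) ∧
        C = Sum.inl '' J ∪ Sum.inr '' Jᶜ) := by
  refine ⟨fun J hJ => isMinCover_cutSet hJ, fun C hC => ?_⟩
  refine ⟨Sum.inl ⁻¹' C, ⟨hC.isDownClosed_inl_preimage, hC.eq_cutSet⟩, ?_⟩
  rintro J ⟨-, hCJ⟩
  exact cutSet_injective (hCJ.symm.trans hC.eq_cutSet)
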